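/- arXiv:1803.03144 — 3 statements merged into one kernel-verified Lean document; each statement's English description precedes it below -/
import Mathlib

section
/- Let C be a cocomplete category and C' a full subcategory such that every object of C' is compact in C, and suppose there is a functor δ : C ⥤ Ind(C') with colim ∘ δ naturally isomorphic to the identity of C, where colim : Ind(C') ⥤ C takes colimits in C. Then δ and colim form an equivalence of categories between C and Ind(C'). -/
/-!
Since `δ ⋙ colim ≅ 𝟭 C`, it suffices to show that `colim` is fully faithful. For `c` in `C'`, the
map `Hom(c, Y) → Hom(colim c, colim Y)` is bijective when `Y` is representable, and both sides
commute with filtered colimits in `Y`, because `c` is compact in `Ind C'` and `colim c ≅ c` is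
compact in `C`. Writing an arbitrary `X` as a filtered colimit of representables, both
`Hom(-, Y)` and `Hom(colim -, colim Y)` turn it into a limit, so `colim` is bijective on
`Hom(X, Y)` as well.
-/

open CategoryTheory CategoryTheory.Limits Opposite

universe v u v₁ u₁ u₂

namespace CategoryTheory

lemma isIso_app_conePt_of_isLimit {C D J : Type*} [Category* C] [Category* D] [Category* J]
    {K : J ⥤ C} {L L' : C ⥤ D} (α : L ⟶ L') [IsIso (Functor.whiskerLeft K α)] {c : Cone K}
    (hL : IsLimit (L.mapCone c)) (hL' : IsLimit (L'.mapCone c)) :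
    IsIso (α.app c.pt) := by
  let e := IsLimit.conePointsIsoOfNatIso hL hL' (asIso (Functor.whiskerLeft K α))
  convert! (inferInstance : IsIso e.hom)
  refine hL'.hom_ext fun j ↦ ?_
  refine Eq.trans ?_ (hL'.map_π (L.mapCone c) _ j).symm
  simp

variable {D : Type u₁} [Category.{v₁} D] {E : Type u₂} [Category.{v₁} E]
  {J : Type*} [Category* J]

def coyonedaMap (F : D ⥤ E) (X : D) :
    coyoneda.obj (op X) ⟶ F ⋙ coyoneda.obj (op (F.obj X)) where
  app _ := TypeCat.ofHom fun f ↦ F.map f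

namespace Functor

variable (F : D ⥤ E) {K : J ⥤ D} {c : Cocone K} [PreservesColimit K F]

lemma map_bijective_to_coconePt (hc : IsColimit c) (X : D)
    [PreservesColimit K (coyoneda.obj (op X))]
    [PreservesColimit (K ⋙ F) (coyoneda.obj (op (F.obj X)))]
    (h : ∀ j, Function.Bijective (F.map : (X ⟶ K.obj j) → _)) :
    Function.Bijective (F.map : (X ⟶ c.pt) → _) := by
  have (j : J) : IsIso ((whiskerLeft K (coyonedaMap F X)).app j) :=
    (isIso_iff_bijective _).mpr (h j)
  have : IsIso (whiskerLeft K (coyonedaMap F X)) := NatIso.isIso_of_isIso_app _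
  exact (isIso_iff_bijective _).mp <|
    isIso_app_coconePt_of_preservesColimit K (coyonedaMap F X) c hc

lemma map_bijective_from_coconePt (hc : IsColimit c) (Y : D)
    (h : ∀ j, Function.Bijective (F.map : (K.obj j ⟶ Y) → _)) :
    Function.Bijective (F.map : (c.pt ⟶ Y) → _) := by
  have (j : Jᵒᵖ) : IsIso ((whiskerLeft K.op (yonedaMap F Y)).app j) :=
    (isIso_iff_bijective _).mpr (h j.unop)
  have : IsIso (whiskerLeft K.op (yonedaMap F Y)) := NatIso.isIso_of_isIso_app _
  exact (isIso_iff_bijective _).mp <| isIso_app_conePt_of_isLimit (yonedaMap F Y)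
    (isLimitOfPreserves (yoneda.obj Y) hc.op)
    (isLimitOfPreserves (yoneda.obj (F.obj Y)) (isColimitOfPreserves F hc).op)

lemma map_bijective_of_fullyFaithful_comp {A : Type*} [Category* A] {G : A ⥤ D} {F : D ⥤ E}
    (hG : G.FullyFaithful) (hGF : (G ⋙ F).FullyFaithful) (a b : A) :
    Function.Bijective (F.map : (G.obj a ⟶ G.obj b) → _) :=
  (Function.Bijective.of_comp_iff _ (hG.map_bijective a b)).mp (hGF.map_bijective a b)

end Functor

namespace Ind

variable {C : Type u} [Category.{v} C]

noncomputable def coyonedaObjYonedaObjIso (c : C) :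
    coyoneda.obj (op (Ind.yoneda.obj c)) ≅
      Ind.inclusion C ⋙ (evaluation Cᵒᵖ (Type v)).obj (op c) :=
  NatIso.ofComponents
    (fun Y ↦ Equiv.toIso <| Ind.inclusion.fullyFaithful.homEquiv.trans <|
      ((Ind.yonedaCompInclusion.app c).homCongr (Iso.refl _)).trans yonedaEquiv)
    (fun f ↦ by ext; simp [yonedaEquiv_comp])

instance preservesColimitsOfShape_coyoneda_obj_yoneda_obj (c : C) (I : Type v) [SmallCategory I]
    [IsFiltered I] : PreservesColimitsOfShape I (coyoneda.obj (op (Ind.yoneda.obj c))) :=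
  preservesColimitsOfShape_of_natIso (coyonedaObjYonedaObjIso c).symm

noncomputable def isColimitPresentationCocone (X : Ind C) :
    IsColimit ((colimit.cocone (X.presentation.F ⋙ Ind.yoneda)).extend
      (Ind.colimitPresentationCompYoneda X).hom) :=
  (colimit.isColimit _).extendIso _

variable {E : Type u₂} [Category.{v} E] (F : Ind C ⥤ E) [PreservesFilteredColimits F]

lemma map_bijective_of_preservesFilteredColimits (hF : (Ind.yoneda ⋙ F).FullyFaithful)
    (hcompact : ∀ c : C, PreservesFilteredColimits (coyoneda.obj (op (F.obj (Ind.yoneda.obj c)))))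
    (X Y : Ind C) : Function.Bijective (F.map : (X ⟶ Y) → _) := by
  have h_yoneda (c : C) (Z : Ind C) :
      Function.Bijective (F.map : (Ind.yoneda.obj c ⟶ Z) → _) :=
    F.map_bijective_to_coconePt (isColimitPresentationCocone Z) _ fun _ ↦
      Functor.map_bijective_of_fullyFaithful_comp Ind.yoneda.fullyFaithful hF _ _
  exact F.map_bijective_from_coconePt (isColimitPresentationCocone X) Y fun _ ↦ h_yoneda _ Y

end Ind
end CategoryTheory

theorem stmt_4_general {C : Type u} [Category.{v} C] (P : C → Prop)
    (hcompact : ∀ c : ObjectProperty.FullSubcategory P,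
      Nonempty (PreservesFilteredColimits (coyoneda.obj (op c.obj))))
    (colim : Ind (ObjectProperty.FullSubcategory P) ⥤ C)
    (hrestrict : Ind.yoneda ⋙ colim ≅ ObjectProperty.ι P)
    (hpres : Nonempty (PreservesFilteredColimits colim))
    (δ : C ⥤ Ind (ObjectProperty.FullSubcategory P))
    (hδ : δ ⋙ colim ≅ 𝟭 C) :
    Nonempty (colim ⋙ δ ≅ 𝟭 (Ind (ObjectProperty.FullSubcategory P))) := by
  have := hpres.some
  have hcompact_colim (c : ObjectProperty.FullSubcategory P) :
      PreservesFilteredColimits (coyoneda.obj (op (colim.obj (Ind.yoneda.obj c)))) :=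
    have : PreservesFilteredColimits (coyoneda.obj (op ((ObjectProperty.ι P).obj c))) :=
      (hcompact c).some
    ⟨fun _ _ _ ↦ preservesColimitsOfShape_of_natIso (coyoneda.mapIso (hrestrict.app c).op)⟩
  obtain ⟨hF⟩ := (Functor.FullyFaithful.nonempty_iff_map_bijective colim).mpr
    (Ind.map_bijective_of_preservesFilteredColimits colim
      ((ObjectProperty.fullyFaithfulι P).ofIso hrestrict.symm) hcompact_colim)
  exact ⟨(hF.whiskeringRight _).preimageIso
    (Functor.associator _ _ _ ≪≫ Functor.isoWhiskerLeft colim hδ ≪≫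
      Functor.rightUnitor colim ≪≫ (Functor.leftUnitor colim).symm)⟩

/-- Let `C` be a cocomplete category and `C'` a full subcategory (given by a predicate `P` on
objects) such that every object of `C'` is compact in `C` (i.e. its covariant hom-functor
preserves filtered colimits).  Suppose `colim : Ind C' ⥤ C` is the functor taking colimits in
`C` (characterized by: it restricts to the inclusion on `C'` and preserves filtered colimits),
and `δ : C ⥤ Ind C'` is a functor with `δ ⋙ colim` naturally isomorphic to the identity of
`C`.  Then `δ` and `colim` form an equivalence of categories between `C` and `Ind C'`. -/
theorem stmt_4 {C : Type u} [Category.{v} C] [HasColimits C] (P : C → Prop)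
    (hcompact : ∀ c : ObjectProperty.FullSubcategory P,
      Nonempty (PreservesFilteredColimits (coyoneda.obj (op c.obj))))
    (colim : Ind (ObjectProperty.FullSubcategory P) ⥤ C)
    (hrestrict : Ind.yoneda ⋙ colim ≅ ObjectProperty.ι P)
    (hpres : Nonempty (PreservesFilteredColimits colim))
    (δ : C ⥤ Ind (ObjectProperty.FullSubcategory P))
    (hδ : δ ⋙ colim ≅ 𝟭 C) :
    Nonempty (colim ⋙ δ ≅ 𝟭 (Ind (ObjectProperty.FullSubcategory P))) :=
  stmt_4_general P hcompact colim hrestrict hpres δ hδ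
end

section
/- The dual vector space of ⊕_{n ∈ ℕ} ℚ has dimension (as a ℚ-vector space) equal to the cardinality of the continuum 2^ℵ₀. -/
open Cardinal

/-- The dual vector space of `⊕_{n ∈ ℕ} ℚ` has dimension, as a `ℚ`-vector space, equal to the
cardinality of the continuum `2 ^ ℵ₀` (Erdős–Kaplansky). -/
theorem stmt_11 :
    Module.rank ℚ (Module.Dual ℚ (ℕ →₀ ℚ)) = Cardinal.continuum := by
  have h : ℵ₀ ≤ Module.rank ℚ (ℕ →₀ ℚ) := by
    rw [rank_finsupp_self]
    simp
  rw [rank_dual_eq_card_dual_of_aleph0_le_rank h]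
  have e : ((ℕ →₀ ℚ) →ₗ[ℚ] ℚ) ≃ (ℕ → ℚ) :=
    ((Finsupp.basisSingleOne (R := ℚ) (ι := ℕ)).constr ℚ (M' := ℚ)).symm.toEquiv
  rw [e.cardinal_eq]
  rw [mk_arrow]; simp [Cardinal.mk_denumerable]
end

section
/- Let x be cofibrant and y fibrant in a model category. Then two maps f, g : x → y are left homotopic if and only if they are right homotopic, and this homotopy relation is an equivalence relation on Hom(x, y). -/
open CategoryTheory CategoryTheory.Limits

universe v u

variable (C : Type u) [Category.{v} C] [HasFiniteLimits C] [HasFiniteColimits C]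

/-- A (closed) model category structure on a finitely complete and cocomplete category `C`:
three classes of morphisms (weak equivalences, cofibrations, fibrations) such that the weak
equivalences contain the isomorphisms and satisfy 2-out-of-3, cofibrations lift against
trivial fibrations and trivial cofibrations lift against fibrations, and every morphism
factors both as a trivial cofibration followed by a fibration and as a cofibration followed
by a trivial fibration. -/
structure ModelStr where
  W : MorphismProperty C
  Cof : MorphismProperty C
  Fib : MorphismProperty C
  w_of_iso : ∀ {x y : C} (f : x ⟶ y), IsIso f → W f
  w_comp : ∀ {x y z : C} (f : x ⟶ y) (g : y ⟶ z), W f → W g → W (f ≫ g)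
  w_cancel_left : ∀ {x y z : C} (f : x ⟶ y) (g : y ⟶ z), W f → W (f ≫ g) → W g
  w_cancel_right : ∀ {x y z : C} (f : x ⟶ y) (g : y ⟶ z), W g → W (f ≫ g) → W f
  w_retract : ∀ {x y x' y' : C} (f : x ⟶ y) (f' : x' ⟶ y'),
    (∃ (i : x ⟶ x') (r : x' ⟶ x) (j : y ⟶ y') (s : y' ⟶ y),
      i ≫ r = 𝟙 x ∧ j ≫ s = 𝟙 y ∧ i ≫ f' = f ≫ j ∧ r ≫ f = f' ≫ s) → W f' → W f
  cof_retract : ∀ {x y x' y' : C} (f : x ⟶ y) (f' : x' ⟶ y'),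
    (∃ (i : x ⟶ x') (r : x' ⟶ x) (j : y ⟶ y') (s : y' ⟶ y),
      i ≫ r = 𝟙 x ∧ j ≫ s = 𝟙 y ∧ i ≫ f' = f ≫ j ∧ r ≫ f = f' ≫ s) → Cof f' → Cof f
  fib_retract : ∀ {x y x' y' : C} (f : x ⟶ y) (f' : x' ⟶ y'),
    (∃ (i : x ⟶ x') (r : x' ⟶ x) (j : y ⟶ y') (s : y' ⟶ y),
      i ≫ r = 𝟙 x ∧ j ≫ s = 𝟙 y ∧ i ≫ f' = f ≫ j ∧ r ≫ f = f' ≫ s) → Fib f' → Fib f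
  lift : ∀ {a b x y : C} (i : a ⟶ b) (p : x ⟶ y), Cof i → Fib p → (W i ∨ W p) →
    HasLiftingProperty i p
  fact_cof_triv_fib : ∀ {x y : C} (f : x ⟶ y), ∃ (z : C) (i : x ⟶ z) (p : z ⟶ y),
    Cof i ∧ Fib p ∧ W p ∧ i ≫ p = f
  fact_triv_cof_fib : ∀ {x y : C} (f : x ⟶ y), ∃ (z : C) (i : x ⟶ z) (p : z ⟶ y),
    Cof i ∧ W i ∧ Fib p ∧ i ≫ p = f

variable {C}

/-- A cylinder object for `x`: a factorization of the fold map `x ⊔ x → x` as a cofibration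
followed by a weak equivalence. -/
structure Cylinder (M : ModelStr C) (x : C) where
  obj : C
  i : (x ⨿ x : C) ⟶ obj
  p : obj ⟶ x
  cof_i : M.Cof i
  w_p : M.W p
  fac : i ≫ p = coprod.desc (𝟙 x) (𝟙 x)

/-- A path object for `y`: a factorization of the diagonal `y → y × y` as a weak equivalence
followed by a fibration. -/
structure PathObj (M : ModelStr C) (y : C) where
  obj : C
  s : y ⟶ obj
  p : obj ⟶ (y ⨯ y : C)
  w_s : M.W s
  fib_p : M.Fib p
  fac : s ≫ p = prod.lift (𝟙 y) (𝟙 y)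

/-- Two maps `f g : x ⟶ y` are left homotopic if some cylinder object for `x` admits a map to
`y` restricting to `f` and `g` on the two inclusions of `x`. -/
def LeftHomotopic (M : ModelStr C) {x y : C} (f g : x ⟶ y) : Prop :=
  ∃ (cyl : Cylinder M x) (H : cyl.obj ⟶ y),
    coprod.inl ≫ cyl.i ≫ H = f ∧ coprod.inr ≫ cyl.i ≫ H = g

/-- Two maps `f g : x ⟶ y` are right homotopic if `x` admits a map to some path object for `y`
projecting to `f` and `g` under the two projections to `y`. -/
def RightHomotopic (M : ModelStr C) {x y : C} (f g : x ⟶ y) : Prop :=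
  ∃ (P : PathObj M y) (H : x ⟶ P.obj),
    H ≫ P.p ≫ prod.fst = f ∧ H ≫ P.p ≫ prod.snd = g

/-- An object is cofibrant if the map from the initial object is a cofibration. -/
def Cofibrant (M : ModelStr C) (x : C) : Prop := M.Cof (initial.to x)

/-- An object is fibrant if the map to the terminal object is a fibration. -/
def Fibrant (M : ModelStr C) (x : C) : Prop := M.Fib (terminal.from x)

/-!
Lifting a cylinder against a path object transports homotopies between the two sides. If `x` is
cofibrant, the ends `x → Cyl x` of a cylinder are trivial cofibrations, so they lift against the
fibration `P y → y × y` of a path object, and a right homotopy followed by a left homotopy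
becomes a right homotopy. Dually, if `y` is fibrant, the projections `P y → y` are trivial
fibrations, so the cofibration `x ⨿ x → Cyl x` lifts against them, and a left homotopy followed
by a right homotopy becomes a left homotopy. Composing with the constant homotopies converts
one kind of homotopy into the other, and then transitivity of either one follows from these
mixed compositions.
-/

variable {D : Type*} [Category D]

attribute [local simp] coprod.inl_desc coprod.inr_desc coprod.inl_desc_assoc coprod.inr_desc_assoc
  prod.lift_fst prod.lift_snd prod.lift_fst_assoc prod.lift_snd_assoc

namespace ModelStr

variable (M : ModelStr D)

lemma cof_of_hasLiftingProperty {a b : D} (f : a ⟶ b)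
    (h : ∀ {e b' : D} (p : e ⟶ b'), M.Fib p → M.W p → HasLiftingProperty f p) : M.Cof f := by
  obtain ⟨z, i, p, hi, hp, hwp, hfac⟩ := M.fact_cof_triv_fib f
  have := h p hp hwp
  have sq : CommSq i f p (𝟙 b) := ⟨by simp [hfac]⟩
  exact M.cof_retract f i ⟨𝟙 a, 𝟙 a, sq.lift, p, by simp, sq.fac_right, by simp, by simp [hfac]⟩ hi

lemma fib_of_hasLiftingProperty {e b : D} (f : e ⟶ b)
    (h : ∀ {a a' : D} (i : a ⟶ a'), M.Cof i → M.W i → HasLiftingProperty i f) : M.Fib f := by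
  obtain ⟨z, i, p, hi, hwi, hp, hfac⟩ := M.fact_triv_cof_fib f
  have := h i hi hwi
  have sq : CommSq (𝟙 e) i f p := ⟨by simp [hfac]⟩
  exact M.fib_retract f p ⟨i, sq.lift, 𝟙 b, 𝟙 b, sq.fac_left, by simp, by simp [hfac], by simp⟩ hp

lemma cof_comp {a b c : D} (f : a ⟶ b) (g : b ⟶ c) (hf : M.Cof f) (hg : M.Cof g) :
    M.Cof (f ≫ g) :=
  M.cof_of_hasLiftingProperty _ fun p hp hwp =>
    have := M.lift f p hf hp (Or.inr hwp)
    have := M.lift g p hg hp (Or.inr hwp)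
    inferInstance

lemma fib_comp {a b c : D} (f : a ⟶ b) (g : b ⟶ c) (hf : M.Fib f) (hg : M.Fib g) :
    M.Fib (f ≫ g) :=
  M.fib_of_hasLiftingProperty _ fun i hi hwi =>
    have := M.lift i f hi hf (Or.inl hwi)
    have := M.lift i g hi hg (Or.inl hwi)
    inferInstance

lemma cof_of_isIso {a b : D} (f : a ⟶ b) [IsIso f] : M.Cof f :=
  M.cof_of_hasLiftingProperty f fun _ _ _ => inferInstance

/-- The inclusion `y ⟶ y ⨿ z` is a pushout of `⊥ ⟶ z`. -/
lemma cof_coprod_inl [HasFiniteColimits D] {y z : D} (hz : Cofibrant M z) :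
    M.Cof (coprod.inl : y ⟶ y ⨿ z) := by
  refine M.cof_of_hasLiftingProperty _ fun p hp hwp => ⟨fun {u v} sq => ?_⟩
  have := M.lift (initial.to z) p hz hp (Or.inr hwp)
  have sq' : CommSq (initial.to _) (initial.to z) p (coprod.inr ≫ v) := ⟨initial.hom_ext _ _⟩
  refine ⟨⟨⟨coprod.desc u sq'.lift, by simp, coprod.hom_ext ?_ ?_⟩⟩⟩
  · simpa using sq.w
  · simp

/-- The projection `y ⨯ z ⟶ y` is a pullback of `z ⟶ ⊤`. -/
lemma fib_prod_fst [HasFiniteLimits D] {y z : D} (hz : Fibrant M z) :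
    M.Fib (prod.fst : y ⨯ z ⟶ y) := by
  refine M.fib_of_hasLiftingProperty _ fun i hi hwi => ⟨fun {u v} sq => ?_⟩
  have := M.lift i (terminal.from z) hi hz (Or.inl hwi)
  have sq' : CommSq (u ≫ prod.snd) i (terminal.from z) (terminal.from _) := ⟨terminal.hom_ext _ _⟩
  refine ⟨⟨⟨prod.lift v sq'.lift, Limits.prod.hom_ext ?_ ?_, by simp⟩⟩⟩
  · simpa using sq.w.symm
  · simp

end ModelStr

namespace Cylinder

variable [HasFiniteColimits D] {M : ModelStr D} {x : D} (cyl : Cylinder M x)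

@[simp]
lemma fac_assoc {z : D} (k : x ⟶ z) : cyl.i ≫ cyl.p ≫ k = coprod.desc k k := by
  rw [← Category.assoc, cyl.fac]
  ext <;> simp

lemma w_inl_i : M.W (coprod.inl ≫ cyl.i) := by
  refine M.w_cancel_right _ cyl.p cyl.w_p ?_
  rw [Category.assoc, cyl.fac, coprod.inl_desc]
  exact M.w_of_iso _ inferInstance

lemma cof_inl_i (hx : Cofibrant M x) : M.Cof (coprod.inl ≫ cyl.i) :=
  M.cof_comp _ _ (M.cof_coprod_inl hx) cyl.cof_i

instance nonempty (x : D) : Nonempty (Cylinder M x) :=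
  let ⟨_, i, p, hi, _, hwp, hfac⟩ := M.fact_cof_triv_fib (coprod.desc (𝟙 x) (𝟙 x))
  ⟨⟨_, i, p, hi, hwp, hfac⟩⟩

noncomputable def swap : Cylinder M x where
  obj := cyl.obj
  i := (coprod.braiding x x).hom ≫ cyl.i
  p := cyl.p
  cof_i := M.cof_comp _ _ (M.cof_of_isIso _) cyl.cof_i
  w_p := cyl.w_p
  fac := by ext <;> simp [cyl.fac]

end Cylinder

namespace PathObj

variable [HasFiniteLimits D] {M : ModelStr D} {y : D} (P : PathObj M y)

@[simp]
lemma fac_assoc {w : D} (k : y ⨯ y ⟶ w) : P.s ≫ P.p ≫ k = prod.lift (𝟙 y) (𝟙 y) ≫ k := by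
  rw [← Category.assoc, P.fac]

lemma w_p_fst : M.W (P.p ≫ prod.fst) := by
  refine M.w_cancel_left P.s _ P.w_s ?_
  rw [← Category.assoc, P.fac, prod.lift_fst]
  exact M.w_of_iso _ inferInstance

lemma fib_p_fst (hy : Fibrant M y) : M.Fib (P.p ≫ prod.fst) :=
  M.fib_comp _ _ P.fib_p (M.fib_prod_fst hy)

instance nonempty (y : D) : Nonempty (PathObj M y) :=
  let ⟨_, s, p, _, hws, hp, hfac⟩ := M.fact_triv_cof_fib (prod.lift (𝟙 y) (𝟙 y))
  ⟨⟨_, s, p, hws, hp, hfac⟩⟩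

end PathObj

variable {M : ModelStr D} {x y : D} {f g h : x ⟶ y}

section

variable [HasFiniteColimits D]

lemma LeftHomotopic.refl (f : x ⟶ y) : LeftHomotopic M f f :=
  let cyl : Cylinder M x := Classical.arbitrary _
  ⟨cyl, cyl.p ≫ f, by simp, by simp⟩

lemma LeftHomotopic.symm : LeftHomotopic M f g → LeftHomotopic M g f := by
  rintro ⟨cyl, H, hf, hg⟩
  exact ⟨cyl.swap, H, by simp [Cylinder.swap, hg], by simp [Cylinder.swap, hf]⟩

end

lemma RightHomotopic.refl [HasFiniteLimits D] (f : x ⟶ y) : RightHomotopic M f f :=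
  let P : PathObj M y := Classical.arbitrary _
  ⟨P, f ≫ P.s, by simp, by simp⟩

variable [HasFiniteLimits D] [HasFiniteColimits D]

lemma RightHomotopic.trans_leftHomotopic (hx : Cofibrant M x) :
    RightHomotopic M h f → LeftHomotopic M f g → RightHomotopic M h g := by
  rintro ⟨P, K, hK₁, hK₂⟩ ⟨cyl, H, hH₁, hH₂⟩
  have := M.lift _ P.p (cyl.cof_inl_i hx) P.fib_p (Or.inl cyl.w_inl_i)
  have sq : CommSq K (coprod.inl ≫ cyl.i) P.p (prod.lift (cyl.p ≫ h) H) :=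
    ⟨Limits.prod.hom_ext (by simpa using hK₁) (by simpa [hH₁] using hK₂)⟩
  refine ⟨P, coprod.inr ≫ cyl.i ≫ sq.lift, ?_, ?_⟩
  · simp
  · simpa using hH₂

lemma LeftHomotopic.trans_rightHomotopic (hy : Fibrant M y) :
    LeftHomotopic M h f → RightHomotopic M f g → LeftHomotopic M h g := by
  rintro ⟨cyl, H, hH₁, hH₂⟩ ⟨P, K, hK₁, hK₂⟩
  have := M.lift cyl.i _ cyl.cof_i (P.fib_p_fst hy) (Or.inr P.w_p_fst)
  have sq : CommSq (coprod.desc (h ≫ P.s) K) cyl.i (P.p ≫ prod.fst) H :=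
    ⟨coprod.hom_ext (by simpa using hH₁.symm) (by simpa [hH₂] using hK₁)⟩
  refine ⟨cyl, sq.lift ≫ P.p ≫ prod.snd, ?_, ?_⟩
  · simp
  · simpa using hK₂

lemma LeftHomotopic.rightHomotopic (hx : Cofibrant M x) (hfg : LeftHomotopic M f g) :
    RightHomotopic M f g :=
  (RightHomotopic.refl f).trans_leftHomotopic hx hfg

lemma RightHomotopic.leftHomotopic (hy : Fibrant M y) (hfg : RightHomotopic M f g) :
    LeftHomotopic M f g :=
  (LeftHomotopic.refl f).trans_rightHomotopic hy hfg

/-- If `x` is cofibrant and `y` is fibrant in a model category, then two maps `f g : x ⟶ y`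
are left homotopic if and only if they are right homotopic, and this homotopy relation is an
equivalence relation on `Hom(x, y)`. -/
theorem stmt_15 (M : ModelStr C) (x y : C) (hx : Cofibrant M x) (hy : Fibrant M y) :
    (∀ f g : x ⟶ y, LeftHomotopic M f g ↔ RightHomotopic M f g) ∧
    _root_.Equivalence (fun f g : x ⟶ y => LeftHomotopic M f g) :=
  ⟨fun _ _ => ⟨fun hfg => hfg.rightHomotopic hx, fun hfg => hfg.leftHomotopic hy⟩,
    ⟨LeftHomotopic.refl, LeftHomotopic.symm,
      fun hfg hgh => hfg.trans_rightHomotopic hy (hgh.rightHomotopic hx)⟩⟩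
end
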